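/- For any λ ∈ Λ_{p,q}^∘ with λ ≠ λ_{p,q}, there exists i ∈ I_{p,q} such that the labels of λ at vertices i and i+1 form one of the pairs ∘∨, ∘∧, ∘×, ∨×, ∧×, ∨∧; consequently there exists a unique μ ∈ Λ_{p,q}^∘ with an edge μ →ᵢ λ in the crystal graph. -/

import Mathlib

/-- The four possible labels of a vertex of a diagrammatic weight. -/
inductive Label : Type
  | circ   -- ∘
  | wedge  -- ∧
  | vee    -- ∨
  | times  -- ×
  deriving DecidableEq

/-- The set `Λ(m|n)` of diagrammatic weights: labelings of `ℤ` in which a total of `m`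
vertices are labelled `×` or `∨`, a total of `n` vertices are labelled `∘` or `∨`,
and all remaining (cofinitely many) vertices are labelled `∧`. -/
def LamSet (m n : ℕ) : Set (ℤ → Label) :=
  {f | {i : ℤ | f i = Label.times ∨ f i = Label.vee}.Finite ∧
       {i : ℤ | f i = Label.times ∨ f i = Label.vee}.ncard = m ∧
       {i : ℤ | f i = Label.circ ∨ f i = Label.vee}.Finite ∧
       {i : ℤ | f i = Label.circ ∨ f i = Label.vee}.ncard = n}

/-- The height of a diagrammatic weight:
`ht(λ) = Σ_{i : λ(i) = ×} i − Σ_{i : λ(i) = ∘} i`. -/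
noncomputable def ht (f : ℤ → Label) : ℤ :=
  (∑ᶠ i ∈ {i : ℤ | f i = Label.times}, i) - (∑ᶠ i ∈ {i : ℤ | f i = Label.circ}, i)

/-- The crystal graph edge relation `μ →ᵢ λ` of colour `i`: `λ` is obtained from `μ` by
changing the labels at vertices `i` and `i+1` according to one of the six local moves
`∨∘ → ∘∨`, `∧∘ → ∘∧`, `×∨ → ∨×`, `×∧ → ∧×`, `×∘ → ∨∧`, `∨∧ → ∘×`,
all other vertices being unchanged. -/
def CrystalEdge (i : ℤ) (mu lam : ℤ → Label) : Prop :=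
  (∀ j : ℤ, j ≠ i → j ≠ i + 1 → lam j = mu j) ∧
  ((mu i = Label.vee ∧ mu (i+1) = Label.circ ∧ lam i = Label.circ ∧ lam (i+1) = Label.vee) ∨
   (mu i = Label.wedge ∧ mu (i+1) = Label.circ ∧ lam i = Label.circ ∧ lam (i+1) = Label.wedge) ∨
   (mu i = Label.times ∧ mu (i+1) = Label.vee ∧ lam i = Label.vee ∧ lam (i+1) = Label.times) ∨
   (mu i = Label.times ∧ mu (i+1) = Label.wedge ∧ lam i = Label.wedge ∧ lam (i+1) = Label.times) ∨
   (mu i = Label.times ∧ mu (i+1) = Label.circ ∧ lam i = Label.vee ∧ lam (i+1) = Label.wedge) ∨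
   (mu i = Label.vee ∧ mu (i+1) = Label.wedge ∧ lam i = Label.circ ∧ lam (i+1) = Label.times))

/-- The ground-state weight `λ_{p,q}`: `×` on vertices `p-m+1, …, p`, `∘` on vertices
`q+1, …, q+n`, and `∧` elsewhere. -/
def lamPQ (m n : ℕ) (p q : ℤ) : ℤ → Label := fun i =>
  if p - m + 1 ≤ i ∧ i ≤ p then Label.times
  else if q + 1 ≤ i ∧ i ≤ q + n then Label.circ
  else Label.wedge

/-- The strip condition defining `Λ_{p,q}`: the label is `∧` at every vertex outside the
interval `I_{p,q}⁺ = {p-m+1, …, q+n}`. -/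
def InStrip (m n : ℕ) (p q : ℤ) : Set (ℤ → Label) :=
  {f | ∀ i : ℤ, (i < p - m + 1 ∨ q + n < i) → f i = Label.wedge}

/-- The balance condition defining `Λ_{p,q}^∘` inside `Λ_{p,q}`: for every
`j ∈ I_{p,q}⁺`, among the vertices `j, …, q+n` the number of `∧`'s is at least the
number of `∨`'s. -/
def BalancedWt (m n : ℕ) (p q : ℤ) (f : ℤ → Label) : Prop :=
  ∀ j : ℤ, p - m + 1 ≤ j → j ≤ q + n →
    {i : ℤ | j ≤ i ∧ i ≤ q + n ∧ f i = Label.vee}.ncard ≤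
    {i : ℤ | j ≤ i ∧ i ≤ q + n ∧ f i = Label.wedge}.ncard

/-
Order the labels `∘ < ∨ < ∧ < ×`. The six pairs in the statement are exactly the strict ascents
of this order. If `λ` has no ascent inside `I_{p,q}⁺`, its labels decrease weakly there; a `∨`
would then be followed only by `∨`'s and `∘`'s, violating the balance condition, so `λ` reads
`×…×∧…∧∘…∘` and the counts `m`, `n` force `λ = λ_{p,q}`.

Each ascending pair is the target of exactly one local move, so `μ` is unique, and undoing that
move preserves everything: within the pair it either fixes or swaps the positions of the
`×`-or-`∨` labels and of the `∘`-or-`∨` labels, and it keeps the `∧`-minus-`∨` weight of the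
pair, hence every suffix balance except possibly the one starting between the two vertices.
-/

namespace Label

def rank : Label → ℕ
  | circ => 0
  | vee => 1
  | wedge => 2
  | times => 3

def weight : Label → ℤ
  | wedge => 1
  | vee => -1
  | _ => 0

def Ascent (c d : Label) : Prop :=
  (c = circ ∧ d = vee) ∨ (c = circ ∧ d = wedge) ∨ (c = circ ∧ d = times) ∨
    (c = vee ∧ d = times) ∨ (c = wedge ∧ d = times) ∨ (c = vee ∧ d = wedge)

def LocalMove (a b c d : Label) : Prop :=
  (a = vee ∧ b = circ ∧ c = circ ∧ d = vee) ∨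
    (a = wedge ∧ b = circ ∧ c = circ ∧ d = wedge) ∨
    (a = times ∧ b = vee ∧ c = vee ∧ d = times) ∨
    (a = times ∧ b = wedge ∧ c = wedge ∧ d = times) ∨
    (a = times ∧ b = circ ∧ c = vee ∧ d = wedge) ∨
    (a = vee ∧ b = wedge ∧ c = circ ∧ d = times)

theorem ascent_of_rank_lt {c d : Label} (h : c.rank < d.rank) : Ascent c d := by
  cases c <;> cases d <;> simp_all [rank, Ascent]

theorem exists_localMove_of_ascent {c d : Label} (h : Ascent c d) : ∃ a b, LocalMove a b c d := by
  rcases h with h | h | h | h | h | h <;> obtain ⟨rfl, rfl⟩ := h <;> simp [LocalMove]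

namespace LocalMove

variable {a b c d : Label}

theorem unique {a' b' : Label} (h : LocalMove a b c d) (h' : LocalMove a' b' c d) :
    a = a' ∧ b = b' := by
  rcases h with h | h | h | h | h | h <;> obtain ⟨rfl, rfl, rfl, rfl⟩ := h <;>
    simp_all [LocalMove]

theorem weight_add_eq (h : LocalMove a b c d) : a.weight + b.weight = c.weight + d.weight := by
  rcases h with h | h | h | h | h | h <;> obtain ⟨rfl, rfl, rfl, rfl⟩ := h <;> rfl

theorem weight_fst_nonpos_or_weight_snd_nonneg (h : LocalMove a b c d) :
    a.weight ≤ 0 ∨ 0 ≤ b.weight := by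
  rcases h with h | h | h | h | h | h <;> obtain ⟨rfl, rfl, rfl, rfl⟩ := h <;> decide

theorem fixes_or_swaps {P : Label → Prop} (h : LocalMove a b c d)
    (hP : P = (fun L => L = times ∨ L = vee) ∨ P = (fun L => L = circ ∨ L = vee)) :
    ((P a ↔ P c) ∧ (P b ↔ P d)) ∨ ((P a ↔ P d) ∧ (P b ↔ P c)) := by
  rcases hP with rfl | rfl <;>
    rcases h with h | h | h | h | h | h <;> obtain ⟨rfl, rfl, rfl, rfl⟩ := h <;> simp

end LocalMove

end Label

open Label

theorem finite_and_ncard_setOf_eq_of_fixes_or_swaps {α : Type*} {f g : ℤ → α} {i : ℤ}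
    {P : α → Prop}
    (hfg : ∀ k, k ≠ i → k ≠ i + 1 → g k = f k)
    (hP : ((P (g i) ↔ P (f i)) ∧ (P (g (i + 1)) ↔ P (f (i + 1)))) ∨
      ((P (g i) ↔ P (f (i + 1))) ∧ (P (g (i + 1)) ↔ P (f i))))
    (hfin : {k | P (f k)}.Finite) :
    {k | P (g k)}.Finite ∧ {k | P (g k)}.ncard = {k | P (f k)}.ncard := by
  obtain ⟨σ, hσ⟩ : ∃ σ : Equiv.Perm ℤ, ∀ k, P (g k) ↔ P (f (σ k)) := by
    rcases hP with ⟨hi, hi'⟩ | ⟨hi, hi'⟩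
    · refine ⟨1, fun k => ?_⟩
      by_cases hk : k = i
      · subst hk; exact hi
      by_cases hk' : k = i + 1
      · subst hk'; exact hi'
      simp [hfg k hk hk']
    · refine ⟨Equiv.swap i (i + 1), fun k => ?_⟩
      by_cases hk : k = i
      · subst hk; simpa using hi
      by_cases hk' : k = i + 1
      · subst hk'; simpa using hi'
      rw [Equiv.swap_apply_of_ne_of_ne hk hk', hfg k hk hk']
  have hset : {k | P (g k)} = σ ⁻¹' {k | P (f k)} := Set.ext hσ
  rw [hset]
  exact ⟨hfin.preimage σ.injective.injOn,
    Set.ncard_preimage_of_injective_subset_range σ.injective (by simp)⟩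

section SuffixBalance

noncomputable def suffixBalance (N : ℤ) (f : ℤ → Label) (j : ℤ) : ℤ :=
  ∑ k ∈ Finset.Icc j N, (f k).weight

variable {N i j : ℤ} {f g : ℤ → Label}

theorem ncard_setOf_eq_sum (N : ℤ) (f : ℤ → Label) (j : ℤ) (L : Label) :
    ({k : ℤ | j ≤ k ∧ k ≤ N ∧ f k = L}.ncard : ℤ) =
      ∑ k ∈ Finset.Icc j N, if f k = L then 1 else 0 := by
  have hset : {k : ℤ | j ≤ k ∧ k ≤ N ∧ f k = L} = ↑((Finset.Icc j N).filter (f · = L)) := by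
    ext k; simp [and_assoc]
  rw [hset, Set.ncard_coe_finset, Finset.natCast_card_filter]

theorem suffixBalance_eq_ncard_sub_ncard (N : ℤ) (f : ℤ → Label) (j : ℤ) :
    suffixBalance N f j = ({k : ℤ | j ≤ k ∧ k ≤ N ∧ f k = wedge}.ncard : ℤ) -
      {k : ℤ | j ≤ k ∧ k ≤ N ∧ f k = vee}.ncard := by
  rw [ncard_setOf_eq_sum, ncard_setOf_eq_sum, suffixBalance, ← Finset.sum_sub_distrib]
  refine Finset.sum_congr rfl fun k _ => ?_
  cases f k <;> rfl

theorem suffixBalance_of_lt (h : N < j) : suffixBalance N f j = 0 := by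
  simp [suffixBalance, Finset.Icc_eq_empty_of_lt h]

theorem suffixBalance_eq_add (h : j ≤ N) :
    suffixBalance N f j = (f j).weight + suffixBalance N f (j + 1) := by
  rw [suffixBalance, suffixBalance, Finset.Icc_eq_cons_Ioc h, Finset.sum_cons,
    Finset.Icc_add_one_left_eq_Ioc]

theorem suffixBalance_congr (h : ∀ k, j ≤ k → g k = f k) :
    suffixBalance N g j = suffixBalance N f j :=
  Finset.sum_congr rfl fun k hk => by rw [h k (Finset.mem_Icc.1 hk).1]

theorem suffixBalance_sub_eq_of_eq_off_pair (hfg : ∀ k, k ≠ i → k ≠ i + 1 → g k = f k)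
    (hj : j ≤ i) (hN : i + 1 ≤ N) :
    suffixBalance N g j - suffixBalance N f j =
      (g i).weight + (g (i + 1)).weight - ((f i).weight + (f (i + 1)).weight) := by
  rw [suffixBalance, suffixBalance, ← Finset.sum_sub_distrib, add_sub_add_comm,
    ← Finset.sum_pair (f := fun k => (g k).weight - (f k).weight) (by omega : i ≠ i + 1)]
  symm
  refine Finset.sum_subset (fun k hk => ?_) fun k _ hk => ?_
  · simp only [Finset.mem_insert, Finset.mem_singleton] at hk
    rw [Finset.mem_Icc]; omega
  · simp only [Finset.mem_insert, Finset.mem_singleton, not_or] at hk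
    rw [hfg k hk.1 hk.2, sub_self]

theorem balancedWt_iff {m n : ℕ} {p q : ℤ} :
    BalancedWt m n p q f ↔ ∀ j, p - m + 1 ≤ j → 0 ≤ suffixBalance (q + n) f j := by
  refine ⟨fun h j hj => ?_, fun h j hj hjN => ?_⟩
  · rcases le_or_gt j (q + n) with hjN | hjN
    · rw [suffixBalance_eq_ncard_sub_ncard, sub_nonneg]
      exact_mod_cast h j hj hjN
    · rw [suffixBalance_of_lt hjN]
  · have := h j hj
    rw [suffixBalance_eq_ncard_sub_ncard, sub_nonneg] at this
    exact_mod_cast this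

end SuffixBalance

section Predecessor

variable {m n : ℕ} {p q i : ℤ} {mu mu' lam : ℤ → Label}

theorem crystalEdge_iff : CrystalEdge i mu lam ↔
    (∀ k, k ≠ i → k ≠ i + 1 → mu k = lam k) ∧
      LocalMove (mu i) (mu (i + 1)) (lam i) (lam (i + 1)) :=
  and_congr_left' ⟨fun h k hk hk' => (h k hk hk').symm, fun h k hk hk' => (h k hk hk').symm⟩

theorem CrystalEdge.unique (h : CrystalEdge i mu lam) (h' : CrystalEdge i mu' lam) :
    mu = mu' := by
  obtain ⟨hoff, hmove⟩ := crystalEdge_iff.1 h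
  obtain ⟨hoff', hmove'⟩ := crystalEdge_iff.1 h'
  obtain ⟨hi, hi'⟩ := hmove.unique hmove'
  funext k
  by_cases hk : k = i
  · subst hk; exact hi
  by_cases hk' : k = i + 1
  · subst hk'; exact hi'
  rw [hoff k hk hk', hoff' k hk hk']

theorem exists_crystalEdge_of_ascent (h : Ascent (lam i) (lam (i + 1))) :
    ∃ mu, CrystalEdge i mu lam := by
  obtain ⟨a, b, hab⟩ := exists_localMove_of_ascent h
  refine ⟨Function.update (Function.update lam i a) (i + 1) b, crystalEdge_iff.2 ⟨?_, ?_⟩⟩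
  · intro k hk hk'
    simp [hk, hk']
  · simpa using hab

theorem mem_lamSet_of_crystalEdge (h : CrystalEdge i mu lam) (hlam : lam ∈ LamSet m n) :
    mu ∈ LamSet m n := by
  obtain ⟨hoff, hmove⟩ := crystalEdge_iff.1 h
  obtain ⟨hX, hXcard, hO, hOcard⟩ := hlam
  obtain ⟨hX', hXcard'⟩ :=
    finite_and_ncard_setOf_eq_of_fixes_or_swaps hoff (hmove.fixes_or_swaps (Or.inl rfl)) hX
  obtain ⟨hO', hOcard'⟩ :=
    finite_and_ncard_setOf_eq_of_fixes_or_swaps hoff (hmove.fixes_or_swaps (Or.inr rfl)) hO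
  exact ⟨hX', hXcard'.trans hXcard, hO', hOcard'.trans hOcard⟩

theorem mem_inStrip_of_crystalEdge (h : CrystalEdge i mu lam) (hi : p - m + 1 ≤ i)
    (hi' : i + 1 ≤ q + n) (hlam : lam ∈ InStrip m n p q) : mu ∈ InStrip m n p q := by
  intro k hk
  rw [(crystalEdge_iff.1 h).1 k (by omega) (by omega)]
  exact hlam k hk

theorem balancedWt_of_crystalEdge (h : CrystalEdge i mu lam) (hi : p - m + 1 ≤ i)
    (hi' : i + 1 ≤ q + n) (hlam : BalancedWt m n p q lam) : BalancedWt m n p q mu := by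
  obtain ⟨hoff, hmove⟩ := crystalEdge_iff.1 h
  rw [balancedWt_iff] at hlam ⊢
  intro j hj
  rcases lt_trichotomy j (i + 1) with hji | rfl | hji
  · have hdiff := suffixBalance_sub_eq_of_eq_off_pair hoff (by omega : j ≤ i) hi'
    linarith [hmove.weight_add_eq, hlam j hj]
  · have hstart := hlam i hi
    rw [suffixBalance_eq_add (by omega), suffixBalance_eq_add hi'] at hstart
    have htail := hlam (i + 1 + 1) (by omega)
    rw [suffixBalance_eq_add hi',
      suffixBalance_congr fun k hk => hoff k (by omega) (by omega)]
    rcases hmove.weight_fst_nonpos_or_weight_snd_nonneg with ha | hb <;>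
      linarith [hmove.weight_add_eq]
  · rw [suffixBalance_congr fun k hk => hoff k (by omega) (by omega)]
    exact hlam j hj

end Predecessor

section Interval

variable {S : Set ℤ}

theorem Int.eq_Ico_of_downwardClosed {a : ℤ} (hfin : S.Finite) (ha : S ⊆ Set.Ici a)
    (hS : ∀ x ∈ S, ∀ y, a ≤ y → y ≤ x → y ∈ S) : S = Set.Ico a (a + S.ncard) := by
  refine Set.eq_of_subset_of_ncard_le (fun x hx => ⟨ha hx, ?_⟩) ?_ (Set.finite_Ico _ _)
  · have hle := Set.ncard_le_ncard (fun y hy => hS x hx y hy.1 hy.2 : Set.Icc a x ⊆ S) hfin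
    rw [← Finset.coe_Icc, Set.ncard_coe_finset, Int.card_Icc] at hle
    have : a ≤ x := ha hx
    omega
  · rw [← Finset.coe_Ico, Set.ncard_coe_finset, Int.card_Ico]
    omega

theorem Int.eq_Ioc_of_upwardClosed {b : ℤ} (hfin : S.Finite) (hb : S ⊆ Set.Iic b)
    (hS : ∀ x ∈ S, ∀ y, x ≤ y → y ≤ b → y ∈ S) : S = Set.Ioc (b - S.ncard) b := by
  refine Set.eq_of_subset_of_ncard_le (fun x hx => ⟨?_, hb hx⟩) ?_ (Set.finite_Ioc _ _)
  · have hle := Set.ncard_le_ncard (fun y hy => hS x hx y hy.1 hy.2 : Set.Icc x b ⊆ S) hfin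
    rw [← Finset.coe_Icc, Set.ncard_coe_finset, Int.card_Icc] at hle
    have : x ≤ b := hb hx
    omega
  · rw [← Finset.coe_Ioc, Set.ncard_coe_finset, Int.card_Ioc]
    omega

end Interval

section GroundState

variable {m n : ℕ} {p q : ℤ} {lam : ℤ → Label}

theorem mem_Icc_of_mem_inStrip (h : lam ∈ InStrip m n p q) {k : ℤ} (hk : lam k ≠ wedge) :
    k ∈ Set.Icc (p - m + 1) (q + n) := by
  by_contra hout
  rw [Set.mem_Icc] at hout
  exact hk (h k (by omega))

theorem antitoneOn_rank_of_forall_not_ascent {a b : ℤ}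
    (h : ∀ i, a ≤ i → i + 1 ≤ b → ¬ Ascent (lam i) (lam (i + 1))) :
    AntitoneOn (fun k => (lam k).rank) (Set.Icc a b) :=
  antitoneOn_of_add_one_le Set.ordConnected_Icc fun i _ hi hi' =>
    not_lt.1 fun hlt => h i hi.1 hi'.2 (ascent_of_rank_lt hlt)

theorem ne_vee_of_antitoneOn (h2 : lam ∈ InStrip m n p q) (h3 : BalancedWt m n p q lam)
    (hanti : AntitoneOn (fun k => (lam k).rank) (Set.Icc (p - m + 1) (q + n))) (k : ℤ) :
    lam k ≠ vee := by
  intro hk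
  obtain ⟨hka, hkb⟩ := mem_Icc_of_mem_inStrip h2 (k := k) (by rw [hk]; decide)
  have htail : suffixBalance (q + n) lam (k + 1) ≤ 0 := Finset.sum_nonpos fun l hl => by
    rw [Finset.mem_Icc] at hl
    have hrank : (lam l).rank ≤ (lam k).rank := hanti ⟨hka, hkb⟩ ⟨by omega, hl.2⟩ (by omega)
    rw [hk] at hrank
    revert hrank
    cases lam l <;> decide
  have hbal := balancedWt_iff.1 h3 k hka
  rw [suffixBalance_eq_add hkb, hk] at hbal
  simp only [weight] at hbal
  omega

theorem setOf_times_eq_Icc (h1 : lam ∈ LamSet m n) (h2 : lam ∈ InStrip m n p q)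
    (hanti : AntitoneOn (fun k => (lam k).rank) (Set.Icc (p - m + 1) (q + n)))
    (hvee : ∀ k, lam k ≠ vee) :
    {k | lam k = times} = Set.Icc (p - m + 1) p := by
  obtain ⟨hfin, hcard, -⟩ := h1
  simp only [hvee, or_false] at hfin hcard
  have hstrip : ∀ k, lam k = times → k ∈ Set.Icc (p - m + 1) (q + n) := fun k hk =>
    mem_Icc_of_mem_inStrip h2 (by rw [hk]; decide)
  have hdown : ∀ x ∈ {k | lam k = times}, ∀ y, p - m + 1 ≤ y → y ≤ x → lam y = times := by
    intro x hx y hy hyx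
    have hrank : (lam x).rank ≤ (lam y).rank :=
      hanti ⟨hy, hyx.trans (hstrip x hx).2⟩ (hstrip x hx) hyx
    rw [show lam x = times from hx] at hrank
    revert hrank
    cases lam y <;> decide
  rw [Int.eq_Ico_of_downwardClosed hfin (fun k hk => (hstrip k hk).1) hdown, hcard]
  ext k
  simp only [Set.mem_Ico, Set.mem_Icc]
  omega

theorem setOf_circ_eq_Icc (h1 : lam ∈ LamSet m n) (h2 : lam ∈ InStrip m n p q)
    (hanti : AntitoneOn (fun k => (lam k).rank) (Set.Icc (p - m + 1) (q + n)))
    (hvee : ∀ k, lam k ≠ vee) :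
    {k | lam k = circ} = Set.Icc (q + 1) (q + n) := by
  obtain ⟨-, -, hfin, hcard⟩ := h1
  simp only [hvee, or_false] at hfin hcard
  have hstrip : ∀ k, lam k = circ → k ∈ Set.Icc (p - m + 1) (q + n) := fun k hk =>
    mem_Icc_of_mem_inStrip h2 (by rw [hk]; decide)
  have hup : ∀ x ∈ {k | lam k = circ}, ∀ y, x ≤ y → y ≤ q + n → lam y = circ := by
    intro x hx y hxy hy
    have hrank : (lam y).rank ≤ (lam x).rank :=
      hanti (hstrip x hx) ⟨(hstrip x hx).1.trans hxy, hy⟩ hxy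
    rw [show lam x = circ from hx] at hrank
    revert hrank
    cases lam y <;> decide
  rw [Int.eq_Ioc_of_upwardClosed hfin (fun k hk => (hstrip k hk).2) hup, hcard]
  ext k
  simp only [Set.mem_Ioc, Set.mem_Icc]
  omega

theorem eq_lamPQ_of_antitoneOn (h1 : lam ∈ LamSet m n) (h2 : lam ∈ InStrip m n p q)
    (h3 : BalancedWt m n p q lam)
    (hanti : AntitoneOn (fun k => (lam k).rank) (Set.Icc (p - m + 1) (q + n))) :
    lam = lamPQ m n p q := by
  have hvee := ne_vee_of_antitoneOn h2 h3 hanti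
  have htimes := Set.ext_iff.1 (setOf_times_eq_Icc h1 h2 hanti hvee)
  have hcirc := Set.ext_iff.1 (setOf_circ_eq_Icc h1 h2 hanti hvee)
  funext k
  specialize htimes k
  specialize hcirc k
  simp only [Set.mem_ofPred_eq, Set.mem_Icc] at htimes hcirc
  unfold lamPQ
  split_ifs with hX hO
  · exact htimes.2 hX
  · exact hcirc.2 hO
  · cases hk : lam k
    · exact absurd (hcirc.1 hk) hO
    · rfl
    · exact absurd hk (hvee k)
    · exact absurd (htimes.1 hk) hX

theorem exists_ascent_of_ne_lamPQ (h1 : lam ∈ LamSet m n) (h2 : lam ∈ InStrip m n p q)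
    (h3 : BalancedWt m n p q lam) (hne : lam ≠ lamPQ m n p q) :
    ∃ i, (p - m + 1 ≤ i ∧ i ≤ q + n - 1) ∧ Ascent (lam i) (lam (i + 1)) := by
  by_contra! hno
  exact hne (eq_lamPQ_of_antitoneOn h1 h2 h3
    (antitoneOn_rank_of_forall_not_ascent fun i hi hi' => hno i ⟨hi, by omega⟩))

end GroundState

theorem exists_crystal_predecessor_general (m n : ℕ) (p q : ℤ)
    (lam : ℤ → Label) (h1 : lam ∈ LamSet m n) (h2 : lam ∈ InStrip m n p q)
    (h3 : BalancedWt m n p q lam) (hne : lam ≠ lamPQ m n p q) :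
    ∃ i : ℤ, (p - m + 1 ≤ i ∧ i ≤ q + n - 1) ∧
      ((lam i = Label.circ ∧ lam (i+1) = Label.vee) ∨
       (lam i = Label.circ ∧ lam (i+1) = Label.wedge) ∨
       (lam i = Label.circ ∧ lam (i+1) = Label.times) ∨
       (lam i = Label.vee ∧ lam (i+1) = Label.times) ∨
       (lam i = Label.wedge ∧ lam (i+1) = Label.times) ∨
       (lam i = Label.vee ∧ lam (i+1) = Label.wedge)) ∧
      ∃! mu : ℤ → Label,
        mu ∈ LamSet m n ∧ mu ∈ InStrip m n p q ∧ BalancedWt m n p q mu ∧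
        CrystalEdge i mu lam := by
  obtain ⟨i, hi, hasc⟩ := exists_ascent_of_ne_lamPQ h1 h2 h3 hne
  obtain ⟨mu, hmu⟩ := exists_crystalEdge_of_ascent hasc
  have hi' : i + 1 ≤ q + n := by omega
  refine ⟨i, hi, hasc, mu, ⟨mem_lamSet_of_crystalEdge hmu h1,
    mem_inStrip_of_crystalEdge hmu hi.1 hi' h2, balancedWt_of_crystalEdge hmu hi.1 hi' h3, hmu⟩, ?_⟩
  rintro mu' ⟨-, -, -, hmu'⟩
  exact hmu'.unique hmu

/-- For any `λ ∈ Λ_{p,q}^∘` with `λ ≠ λ_{p,q}` there exists `i ∈ I_{p,q}` such that the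
labels of `λ` at vertices `i` and `i+1` form one of the pairs
`∘∨, ∘∧, ∘×, ∨×, ∧×, ∨∧`; consequently there exists a unique `μ ∈ Λ_{p,q}^∘` with an
edge `μ →ᵢ λ` in the crystal graph. -/
theorem exists_crystal_predecessor (m n : ℕ) (p q : ℤ) (hpq : p ≤ q)
    (lam : ℤ → Label) (h1 : lam ∈ LamSet m n) (h2 : lam ∈ InStrip m n p q)
    (h3 : BalancedWt m n p q lam) (hne : lam ≠ lamPQ m n p q) :
    ∃ i : ℤ, (p - m + 1 ≤ i ∧ i ≤ q + n - 1) ∧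
      ((lam i = Label.circ ∧ lam (i+1) = Label.vee) ∨
       (lam i = Label.circ ∧ lam (i+1) = Label.wedge) ∨
       (lam i = Label.circ ∧ lam (i+1) = Label.times) ∨
       (lam i = Label.vee ∧ lam (i+1) = Label.times) ∨
       (lam i = Label.wedge ∧ lam (i+1) = Label.times) ∨
       (lam i = Label.vee ∧ lam (i+1) = Label.wedge)) ∧
      ∃! mu : ℤ → Label,
        mu ∈ LamSet m n ∧ mu ∈ InStrip m n p q ∧ BalancedWt m n p q mu ∧
        CrystalEdge i mu lam :=
  exists_crystal_predecessor_general m n p q lam h1 h2 h3 hne
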